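/- Let k ≥ 3 be odd. Let v₀, v₁, v₂ ∈ ℝ² be affinely independent points and let K be their convex hull. Let λ : ℝ² → ℝ be the unique affine map with λ(v₁) = 1 and λ(v₀) = λ(v₂) = 0 (the barycentric coordinate of v₁). Then for every bivariate real polynomial p of total degree at most k − 2, ∫_K P_k(1 − 2·λ(x)) · p(x) dx = 0, where the integral is with respect to the two-dimensional Lebesgue measure. -/

import Mathlib

/-!
An affine change of variables carries the reference triangle `{y ≥ 0, y₀ + y₁ ≤ 1}` onto `K`,
pulls `λ` back to the coordinate `y₀` and does not raise the total degree of `p`. On the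
reference triangle, integrating a monomial `y₀ ^ a * y₁ ^ b` in `y₁` first leaves
`∫₀¹ P_k(1 - 2s) r(s) ds` with `deg r = a + b + 1 < k`. After the substitution `t = 1 - 2s`
this vanishes because `P_k` is orthogonal on `[-1, 1]` to all polynomials of degree `< k`,
which follows from Rodrigues' formula by `k` integrations by parts: the boundary terms vanish
since `±1` are `k`-fold roots of `(t² - 1) ^ k`.
-/

open MeasureTheory Polynomial

/-- The Legendre polynomial of degree `n`, defined via the Rodrigues formula
`P_n(t) = (1/(2^n · n!)) · (d/dt)^n (t² − 1)^n`. -/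
noncomputable def legendre (n : ℕ) : Polynomial ℝ :=
  ((1 : ℝ) / (2 ^ n * n.factorial)) • (⇑(derivative (R := ℝ)))^[n] ((X ^ 2 - 1) ^ n)

namespace Polynomial

theorem isRoot_iterate_derivative_pow {R : Type*} [CommRing R] {q : R[X]} {a : R}
    (ha : q.IsRoot a) {m n : ℕ} (hmn : m < n) : (derivative^[m] (q ^ n)).IsRoot a := by
  obtain ⟨r, hr⟩ := pow_sub_dvd_iterate_derivative_pow q n m
  rw [hr, IsRoot, eval_mul, eval_pow, ha.eq_zero, zero_pow (by omega), zero_mul]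

theorem integral_derivative_mul_eq_neg {a b : ℝ} {g : ℝ[X]} (ha : g.IsRoot a)
    (hb : g.IsRoot b) (h : ℝ[X]) :
    ∫ x in a..b, (derivative g).eval x * h.eval x =
      -∫ x in a..b, g.eval x * (derivative h).eval x := by
  have := intervalIntegral.integral_mul_deriv_eq_deriv_mul (a := a) (b := b)
    (fun x _ ↦ g.hasDerivAt x) (fun x _ ↦ h.hasDerivAt x)
    ((derivative g).continuous.intervalIntegrable _ _)
    ((derivative h).continuous.intervalIntegrable _ _)
  rw [ha.eq_zero, hb.eq_zero] at this
  linarith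

theorem integral_iterate_derivative_X_sq_sub_one_pow_mul {n m : ℕ} (hm : m ≤ n) (r : ℝ[X]) :
    ∫ x in (-1)..1, (derivative^[m] ((X ^ 2 - 1 : ℝ[X]) ^ n)).eval x * r.eval x =
      (-1) ^ m * ∫ x in (-1)..1, ((X ^ 2 - 1 : ℝ[X]) ^ n).eval x * (derivative^[m] r).eval x := by
  induction m generalizing r with
  | zero => simp
  | succ m ih =>
    have hroot : ∀ a : ℝ, a ^ 2 = 1 → (derivative^[m] ((X ^ 2 - 1 : ℝ[X]) ^ n)).IsRoot a :=
      fun a ha ↦ isRoot_iterate_derivative_pow (by simp [ha]) hm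
    rw [Function.iterate_succ_apply', integral_derivative_mul_eq_neg (hroot _ (by norm_num))
      (hroot _ (by norm_num)), ih (by omega), Function.iterate_succ_apply, pow_succ]
    ring

end Polynomial

theorem integral_legendre_mul_eq_zero {n : ℕ} {r : ℝ[X]} (hr : r.natDegree < n) :
    ∫ x in (-1)..1, (legendre n).eval x * r.eval x = 0 := by
  simp only [legendre, eval_smul, smul_eq_mul, mul_assoc, intervalIntegral.integral_const_mul,
    integral_iterate_derivative_X_sq_sub_one_pow_mul le_rfl, iterate_derivative_eq_zero hr,
    eval_zero, mul_zero, intervalIntegral.integral_zero]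

theorem integral_legendre_one_sub_two_mul_mul_eq_zero {n : ℕ} {r : ℝ[X]}
    (hr : r.natDegree < n) :
    ∫ s in (0 : ℝ)..1, (legendre n).eval (1 - 2 * s) * r.eval s = 0 := by
  obtain ⟨r', hr'_deg, hr'_eval⟩ :
      ∃ r' : ℝ[X], r'.natDegree < n ∧ ∀ s, r'.eval (1 - 2 * s) = r.eval s := by
    refine ⟨r.comp (C 2⁻¹ * (1 - X)), lt_of_le_of_lt (natDegree_comp_le.trans ?_) hr,
      fun s ↦ by simp⟩
    exact (Nat.mul_le_mul_left _ (by compute_degree!)).trans (mul_one _).le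
  have h := intervalIntegral.integral_comp_sub_mul (a := 0) (b := 1)
    (fun t ↦ (legendre n).eval t * r'.eval t) (by norm_num : (2 : ℝ) ≠ 0) 1
  norm_num [hr'_eval, integral_legendre_mul_eq_zero hr'_deg] at h
  exact h

namespace MvPolynomial

theorem totalDegree_bind₁_le {σ τ R : Type*} [CommSemiring R] {f : σ → MvPolynomial τ R}
    (hf : ∀ i, (f i).totalDegree ≤ 1) (p : MvPolynomial σ R) :
    (bind₁ f p).totalDegree ≤ p.totalDegree := by
  conv_lhs => rw [p.as_sum, map_sum]
  refine (totalDegree_finsetSum _ _).trans (Finset.sup_le fun d hd ↦ ?_)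
  rw [bind₁_monomial]
  refine (totalDegree_mul _ _).trans ?_
  rw [totalDegree_C, zero_add]
  refine (totalDegree_finsetProd _ _).trans ((Finset.sum_le_sum fun i _ ↦
    (totalDegree_pow _ _).trans (Nat.mul_le_mul_left _ (hf i))).trans ?_)
  simp only [mul_one]
  exact le_totalDegree hd

theorem exists_totalDegree_le_eval_eq_eval_affineMap {σ τ R : Type*} [CommRing R] [Fintype σ]
    [DecidableEq σ] (φ : (σ → R) →ᵃ[R] (τ → R)) (p : MvPolynomial τ R) :
    ∃ q : MvPolynomial σ R, q.totalDegree ≤ p.totalDegree ∧ ∀ y, eval y q = eval (φ y) p := by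
  refine ⟨bind₁ (fun i ↦ C (φ 0 i) + ∑ j, C (φ.linear (Pi.single j 1) i) * X j) p,
    totalDegree_bind₁_le (fun i ↦ ?_) p, fun y ↦ ?_⟩
  · refine (totalDegree_add _ _).trans (max_le (by simp)
      ((totalDegree_finsetSum _ _).trans (Finset.sup_le fun j _ ↦ ?_)))
    rw [C_mul_X_eq_monomial]
    exact (totalDegree_monomial_le _ _).trans (by simp)
  · suffices h : (fun i ↦ eval y (C (φ 0 i) + ∑ j, C (φ.linear (Pi.single j 1) i) * X j)) =
        φ y by
      rw [← h]
      exact eval₂Hom_bind₁ _ _ _ _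
    ext i
    have hsingle : ∀ j, Pi.single j (y j) = y j • (Pi.single j 1 : σ → R) := fun j ↦ by
      rw [← Pi.single_smul, smul_eq_mul, mul_one]
    conv_rhs => rw [φ.decomp, Pi.add_apply, ← Finset.univ_sum_single y, map_sum]
    simp [hsingle, Finset.sum_apply, add_comm, mul_comm]

end MvPolynomial

section TriangleParam

variable {k V W : Type*} [Field k] [AddCommGroup V] [Module k V] [AddCommGroup W] [Module k W]

variable (k) in
noncomputable def triangleParam (v₀ v₁ v₂ : V) : (Fin 2 → k) →ᵃ[k] V :=
  (Fintype.linearCombination k ![v₁ - v₀, v₂ - v₀]).toAffineMap + AffineMap.const k _ v₀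

theorem triangleParam_apply (v₀ v₁ v₂ : V) (y : Fin 2 → k) :
    triangleParam k v₀ v₁ v₂ y = y 0 • (v₁ - v₀) + y 1 • (v₂ - v₀) + v₀ := by
  simp [triangleParam, Fintype.linearCombination_apply, Fin.sum_univ_two]

theorem AffineMap.apply_triangleParam (f : V →ᵃ[k] W) (v₀ v₁ v₂ : V) (y : Fin 2 → k) :
    f (triangleParam k v₀ v₁ v₂ y) = triangleParam k (f v₀) (f v₁) (f v₂) y := by
  rw [triangleParam_apply, triangleParam_apply, ← vadd_eq_add _ v₀, f.map_vadd, map_add,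
    map_smul, map_smul, ← vsub_eq_sub v₁, ← vsub_eq_sub v₂, f.linearMap_vsub, f.linearMap_vsub]
  rfl

theorem injective_triangleParam {v₀ v₁ v₂ : V} (h : AffineIndependent k ![v₀, v₁, v₂]) :
    Function.Injective (triangleParam k v₀ v₁ v₂) := by
  intro y y' hyy'
  have hsum : ∀ y : Fin 2 → k, ∑ i, ![1 - y 0 - y 1, y 0, y 1] i • ![v₀, v₁, v₂] i =
      triangleParam k v₀ v₁ v₂ y := fun y ↦ by
    simp only [Fin.sum_univ_three, triangleParam_apply, Matrix.cons_val_zero, Matrix.cons_val_one,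
      Matrix.cons_val]
    module
  have key := h.eq_of_sum_eq_sum (s := Finset.univ) (by simp [Fin.sum_univ_three]; ring)
    ((hsum y).trans (hyy'.trans (hsum y').symm))
  ext i
  fin_cases i
  · simpa using key 1
  · simpa using key 2

end TriangleParam

def refTriangle : Set (Fin 2 → ℝ) := {y | 0 ≤ y 0 ∧ 0 ≤ y 1 ∧ y 0 + y 1 ≤ 1}

theorem convexHull_zero_single_single :
    convexHull ℝ {0, Pi.single 0 1, Pi.single 1 1} = refTriangle := by
  apply le_antisymm
  · refine convexHull_min ?_ ?_
    · rintro y (rfl | rfl | rfl) <;> norm_num [refTriangle]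
    · rintro x ⟨hx0, hx1, hx2⟩ y ⟨hy0, hy1, hy2⟩ a b ha hb hab
      refine ⟨?_, ?_, ?_⟩ <;> simp only [Pi.add_apply, Pi.smul_apply, smul_eq_mul] <;> nlinarith
  · rintro y ⟨h0, h1, h2⟩
    have hy : ∑ i, ![1 - y 0 - y 1, y 0, y 1] i •
        ![(0 : Fin 2 → ℝ), Pi.single 0 1, Pi.single 1 1] i = y := by
      ext j; fin_cases j <;> simp [Fin.sum_univ_three]
    rw [← hy]
    refine (convex_convexHull ℝ _).sum_mem (fun i _ ↦ ?_) (by simp [Fin.sum_univ_three]; ring)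
      (fun i _ ↦ subset_convexHull ℝ _ ?_)
    · fin_cases i <;> simp only [Fin.zero_eta, Fin.mk_one, Fin.reduceFinMk, Matrix.cons_val_zero,
        Matrix.cons_val_one, Matrix.cons_val] <;> linarith
    · fin_cases i <;> simp

theorem isCompact_refTriangle : IsCompact refTriangle :=
  convexHull_zero_single_single ▸ (Set.toFinite _).isCompact_convexHull (𝕜 := ℝ)

theorem image_triangleParam_refTriangle {V : Type*} [AddCommGroup V] [Module ℝ V] (v₀ v₁ v₂ : V) :
    triangleParam ℝ v₀ v₁ v₂ '' refTriangle = convexHull ℝ {v₀, v₁, v₂} := by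
  rw [← convexHull_zero_single_single, AffineMap.image_convexHull]
  simp [Set.image_insert_eq, triangleParam_apply]

theorem integral_convexHull_eq_smul_integral_refTriangle {E : Type*} [NormedAddCommGroup E]
    [NormedSpace ℝ E] {v₀ v₁ v₂ : Fin 2 → ℝ} (h : AffineIndependent ℝ ![v₀, v₁, v₂])
    (g : (Fin 2 → ℝ) → E) :
    ∫ x in convexHull ℝ {v₀, v₁, v₂}, g x =
      |LinearMap.det (triangleParam ℝ v₀ v₁ v₂).linear| •
        ∫ y in refTriangle, g (triangleParam ℝ v₀ v₁ v₂ y) := by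
  set φ := triangleParam ℝ v₀ v₁ v₂
  have hφ : ∀ y, HasFDerivWithinAt φ (LinearMap.toContinuousLinearMap φ.linear) refTriangle y :=
    fun y ↦ φ.decomp ▸ ((LinearMap.toContinuousLinearMap φ.linear).hasFDerivAt.add_const
      (φ 0)).hasFDerivWithinAt
  rw [← image_triangleParam_refTriangle, integral_image_eq_integral_abs_det_fderiv_smul volume
    isCompact_refTriangle.isClosed.measurableSet (fun y _ ↦ hφ y) (injective_triangleParam h).injOn,
    integral_smul]
  rfl

theorem integral_refTriangle {E : Type*} [NormedAddCommGroup E] [NormedSpace ℝ E]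
    {g : (Fin 2 → ℝ) → E} (hg : Continuous g) :
    ∫ y in refTriangle, g y = ∫ s in (0 : ℝ)..1, ∫ t in (0 : ℝ)..(1 - s), g ![s, t] := by
  have e := (volume_preserving_finTwoArrow ℝ).symm
  have he := MeasurableEquiv.measurableEmbedding (MeasurableEquiv.finTwoArrow (α := ℝ)).symm
  have hT := isCompact_refTriangle.isClosed.measurableSet
  have hint := (e.integrableOn_comp_preimage he).2
    (hg.continuousOn.integrableOn_compact isCompact_refTriangle)
  rw [← e.setIntegral_preimage_emb he, ← integral_indicator (hT.preimage e.measurable),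
    Measure.volume_eq_prod,
    integral_prod _ (by exact (integrable_indicator_iff (hT.preimage e.measurable)).2 hint),
    intervalIntegral.integral_of_le zero_le_one, ← integral_Icc_eq_integral_Ioc,
    ← integral_indicator measurableSet_Icc]
  have hmem : ∀ s t : ℝ, (s, t) ∈ MeasurableEquiv.finTwoArrow.symm ⁻¹' refTriangle ↔
      0 ≤ s ∧ 0 ≤ t ∧ s + t ≤ 1 := fun _ _ ↦ Iff.rfl
  congr 1 with s
  by_cases hs : s ∈ Set.Icc (0 : ℝ) 1
  · rw [Set.indicator_of_mem hs, intervalIntegral.integral_of_le (by linarith [hs.2]),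
      ← integral_Icc_eq_integral_Ioc, ← integral_indicator measurableSet_Icc]
    congr 1 with t
    have hst : (s, t) ∈ MeasurableEquiv.finTwoArrow.symm ⁻¹' refTriangle ↔
        t ∈ Set.Icc 0 (1 - s) := (hmem s t).trans
      ⟨fun h ↦ ⟨h.2.1, by linarith [h.2.2]⟩, fun h ↦ ⟨hs.1, h.1, by linarith [h.2]⟩⟩
    by_cases ht : t ∈ Set.Icc 0 (1 - s)
    · rw [Set.indicator_of_mem ht, Set.indicator_of_mem (hst.2 ht)]
      rfl
    · rw [Set.indicator_of_notMem ht, Set.indicator_of_notMem (mt hst.1 ht)]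
  · rw [Set.indicator_of_notMem hs]
    refine integral_eq_zero_of_ae (ae_of_all _ fun t ↦ Set.indicator_of_notMem ?_ _)
    exact fun h ↦ hs ⟨((hmem s t).1 h).1, by linarith [(hmem s t).1 h]⟩

theorem integral_refTriangle_legendre_mul_monomial {n a b : ℕ} (hab : a + b + 1 < n) :
    ∫ y in refTriangle, (legendre n).eval (1 - 2 * y 0) * (y 0 ^ a * y 1 ^ b) = 0 := by
  rw [integral_refTriangle (by fun_prop)]
  have hinner : ∀ s : ℝ, ∫ t in (0 : ℝ)..(1 - s),
      (legendre n).eval (1 - 2 * ![s, t] 0) * (![s, t] 0 ^ a * ![s, t] 1 ^ b) =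
        (legendre n).eval (1 - 2 * s) *
          (X ^ a * (1 - X) ^ (b + 1) * C ((b : ℝ) + 1)⁻¹).eval s := by
    intro s
    simp only [Matrix.cons_val_zero, Matrix.cons_val_one, mul_left_comm _ (s ^ a), ← mul_assoc,
      intervalIntegral.integral_const_mul, integral_pow, zero_pow (Nat.succ_ne_zero _), sub_zero,
      eval_mul, eval_pow, eval_X, eval_sub, eval_one, eval_C]
    ring
  simp_rw [hinner]
  refine integral_legendre_one_sub_two_mul_mul_eq_zero (lt_of_le_of_lt ?_ hab)
  compute_degree
  omega

theorem integral_refTriangle_legendre_mul_eval_eq_zero {n : ℕ} {q : MvPolynomial (Fin 2) ℝ}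
    (hq : q.totalDegree + 1 < n) :
    ∫ y in refTriangle, (legendre n).eval (1 - 2 * y 0) * MvPolynomial.eval y q = 0 := by
  simp_rw [MvPolynomial.eval_eq', Fin.prod_univ_two, Finset.mul_sum]
  rw [integral_finsetSum _ fun d _ ↦
    (ContinuousOn.integrableOn_compact isCompact_refTriangle (by fun_prop))]
  refine Finset.sum_eq_zero fun d hd ↦ ?_
  simp_rw [mul_left_comm _ (q.coeff d)]
  rw [integral_const_mul, integral_refTriangle_legendre_mul_monomial, mul_zero]
  have := MvPolynomial.le_totalDegree hd
  rw [Finsupp.sum_fintype _ _ (fun _ ↦ rfl), Fin.sum_univ_two] at this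
  omega

theorem stmt_2_general (k : ℕ) (hk : 3 ≤ k)
    (v₀ v₁ v₂ : Fin 2 → ℝ) (hind : AffineIndependent ℝ ![v₀, v₁, v₂])
    (lam : (Fin 2 → ℝ) →ᵃ[ℝ] ℝ)
    (hlam₁ : lam v₁ = 1) (hlam₀ : lam v₀ = 0) (hlam₂ : lam v₂ = 0)
    (p : MvPolynomial (Fin 2) ℝ) (hp : p.totalDegree ≤ k - 2) :
    ∫ x in convexHull ℝ {v₀, v₁, v₂},
        (legendre k).eval (1 - 2 * lam x) * MvPolynomial.eval x p = 0 := by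
  obtain ⟨q, hq_deg, hq_eval⟩ :=
    MvPolynomial.exists_totalDegree_le_eval_eq_eval_affineMap (triangleParam ℝ v₀ v₁ v₂) p
  have hlam : ∀ y, lam (triangleParam ℝ v₀ v₁ v₂ y) = y 0 := fun y ↦ by
    rw [lam.apply_triangleParam, hlam₀, hlam₁, hlam₂, triangleParam_apply]
    simp
  rw [integral_convexHull_eq_smul_integral_refTriangle hind]
  simp_rw [hlam, ← hq_eval]
  rw [integral_refTriangle_legendre_mul_eval_eq_zero (by omega), smul_zero]

/-- Volume-orthogonality of the non-conforming Crouzeix–Raviart edge basis function: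
for odd `k ≥ 3`, a triangle `K` with vertices `v₀, v₁, v₂` and `λ` the barycentric
coordinate of `v₁`, the function `x ↦ P_k(1 − 2·λ(x))` is `L²(K)`-orthogonal to all
bivariate polynomials of total degree at most `k − 2`. -/
theorem stmt_2 (k : ℕ) (hk : 3 ≤ k) (hodd : Odd k)
    (v₀ v₁ v₂ : Fin 2 → ℝ) (hind : AffineIndependent ℝ ![v₀, v₁, v₂])
    (lam : (Fin 2 → ℝ) →ᵃ[ℝ] ℝ)
    (hlam₁ : lam v₁ = 1) (hlam₀ : lam v₀ = 0) (hlam₂ : lam v₂ = 0)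
    (p : MvPolynomial (Fin 2) ℝ) (hp : p.totalDegree ≤ k - 2) :
    ∫ x in convexHull ℝ {v₀, v₁, v₂},
        (legendre k).eval (1 - 2 * lam x) * MvPolynomial.eval x p = 0 :=
  stmt_2_general k hk v₀ v₁ v₂ hind lam hlam₁ hlam₀ hlam₂ p hp
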